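/- arXiv:2006.10605 — 2 statements merged into one kernel-verified Lean document; each statement's English description precedes it below -/
import Mathlib

section
/- Let d ≥ 1, let B = {z ∈ ℝ^d : ‖z‖ < 1} be the open unit ball, and let f : B × ℝ → ℝ^d be a continuously differentiable vector field whose hyperbolic norm is bounded, i.e. there is c > 0 with (2 / (1 − ‖z‖²)) · ‖f(z,t)‖ ≤ c for all z ∈ B and t ∈ ℝ. Then for every z₀ ∈ B there exists an integral curve γ : ℝ → ℝ^d with γ(0) = z₀, γ'(t) = f(γ(t), t) and ‖γ(t)‖ < 1 for all t ∈ ℝ; that is, the flow exists for all time and never leaves the Poincaré disk. (Instance of Proposition 1 for the Poincaré ball 𝔹^d, using completeness of the hyperbolic metric.) -/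
/-!
Along an integral curve in the ball, `w = 1 - ‖γ‖²` satisfies `|w'| ≤ 2 ‖f‖ ≤ c w` because the
hyperbolic speed is at most `c`, so `w t ≥ w 0 · e^{-2c|t|}`: on `[-T, T]` the curve is confined
to a ball of radius `< 1` depending only on `T` and `‖z₀‖`. Cutting `f` off near the unit sphere
gives a bounded `C¹` field on the whole space; Picard–Lindelöf solves it on `[-T, T]`, the a
priori bound shows that this solution never meets the cutoff, and uniqueness of solutions lets
the solutions for `T = 1, 2, …` be patched into a single one defined for all time.
-/

open Set Metric Real

section NormedSpace

variable {E F : Type*} [NormedAddCommGroup E] [NormedSpace ℝ E] [NormedAddCommGroup F]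
  [NormedSpace ℝ F]

theorem ContDiffOn.exists_lipschitzOnWith_of_prod_univ {U K : Set E} (hU : Convex ℝ U)
    {f : E → ℝ → F} (hf : ContDiffOn ℝ 1 (fun q : E × ℝ => f q.1 q.2) (U ×ˢ univ))
    (hK : IsCompact K) (hKU : K ⊆ U) (a b : ℝ) :
    ∃ L, ∀ t ∈ Icc a b, LipschitzOnWith L (fun z => f z t) K := by
  obtain ⟨L, hL⟩ := ((hf.locallyLipschitzOn (hU.prod convex_univ)).mono
    (prod_mono hKU (subset_univ (Icc a b)))).exists_lipschitzOnWith_of_compact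
    (hK.prod isCompact_Icc)
  refine ⟨L, fun t ht => ?_⟩
  have := hL.comp (LipschitzWith.prodMk_right t).lipschitzOnWith fun z hz => mk_mem_prod hz ht
  rwa [mul_one] at this

theorem ODE_solution_unique_of_contDiffOn {U : Set E} (hU : Convex ℝ U) {f : E → ℝ → E}
    (hf : ContDiffOn ℝ 1 (fun q : E × ℝ => f q.1 q.2) (U ×ˢ univ)) {γ₁ γ₂ : ℝ → E}
    {a b t₀ : ℝ} (ht₀ : t₀ ∈ Ioo a b)
    (hγ₁ : ∀ t ∈ Icc a b, HasDerivWithinAt γ₁ (f (γ₁ t) t) (Icc a b) t)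
    (hγ₂ : ∀ t ∈ Icc a b, HasDerivWithinAt γ₂ (f (γ₂ t) t) (Icc a b) t)
    (hγ₁U : MapsTo γ₁ (Icc a b) U) (hγ₂U : MapsTo γ₂ (Icc a b) U) (h : γ₁ t₀ = γ₂ t₀) :
    EqOn γ₁ γ₂ (Icc a b) := by
  have hcont : ∀ γ : ℝ → E, (∀ t ∈ Icc a b, HasDerivWithinAt γ (f (γ t) t) (Icc a b) t) →
      ContinuousOn γ (Icc a b) := fun γ hγ t ht => (hγ t ht).continuousWithinAt
  have hderiv : ∀ γ : ℝ → E, (∀ t ∈ Icc a b, HasDerivWithinAt γ (f (γ t) t) (Icc a b) t) →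
      ∀ t ∈ Ioo a b, HasDerivAt γ (f (γ t) t) t := fun γ hγ t ht =>
    (hγ t (Ioo_subset_Icc_self ht)).hasDerivAt (Icc_mem_nhds ht.1 ht.2)
  set K := γ₁ '' Icc a b ∪ γ₂ '' Icc a b
  obtain ⟨L, hL⟩ := hf.exists_lipschitzOnWith_of_prod_univ hU
    ((isCompact_Icc.image_of_continuousOn (hcont γ₁ hγ₁)).union
      (isCompact_Icc.image_of_continuousOn (hcont γ₂ hγ₂)))
    (union_subset (image_subset_iff.2 hγ₁U) (image_subset_iff.2 hγ₂U)) a b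
  exact ODE_solution_unique_of_mem_Icc (s := fun _ => K)
    (fun t ht => hL t (Ioo_subset_Icc_self ht)) ht₀ (hcont γ₁ hγ₁) (hderiv γ₁ hγ₁)
    (fun t ht => Or.inl (mem_image_of_mem γ₁ (Ioo_subset_Icc_self ht)))
    (hcont γ₂ hγ₂) (hderiv γ₂ hγ₂)
    (fun t ht => Or.inr (mem_image_of_mem γ₂ (Ioo_subset_Icc_self ht))) h

theorem contDiff_smul_of_tsupport_subset {n : WithTop ℕ∞} {U : Set E} (hU : IsOpen U)
    {φ : E → ℝ} (hφ : ContDiff ℝ n φ) (hφU : tsupport φ ⊆ U) {f : E → ℝ → F}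
    (hf : ContDiffOn ℝ n (fun q : E × ℝ => f q.1 q.2) (U ×ˢ univ)) :
    ContDiff ℝ n (fun q : E × ℝ => φ q.1 • f q.1 q.2) := by
  refine contDiff_of_contDiffOn_union_of_isOpen
    ((hφ.comp contDiff_fst).contDiffOn.smul hf) (contDiffOn_const (c := (0 : F)).congr ?_)
    ?_ (hU.prod isOpen_univ) ((isClosed_tsupport φ).isOpen_compl.prod isOpen_univ)
  · rintro q ⟨hq, -⟩
    rw [image_eq_zero_of_notMem_tsupport hq, zero_smul]
  · rw [← union_prod, eq_univ_iff_forall]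
    exact fun q => ⟨(em (q.1 ∈ tsupport φ)).imp (@hφU _) id, trivial⟩

theorem ContDiff.exists_hasDerivWithinAt_Icc [ProperSpace F] {g : F → ℝ → F}
    (hg : ContDiff ℝ 1 (fun q : F × ℝ => g q.1 q.2)) {M : ℝ} (hM : ∀ z t, ‖g z t‖ ≤ M)
    (x₀ : F) {T : ℝ} (hT : 0 ≤ T) :
    ∃ γ : ℝ → F, γ 0 = x₀ ∧ ∀ t ∈ Icc (-T) T, HasDerivWithinAt γ (g (γ t) t) (Icc (-T) T) t := by
  have hM₀ : 0 ≤ M := (norm_nonneg _).trans (hM x₀ 0)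
  obtain ⟨L, hL⟩ := hg.contDiffOn.exists_lipschitzOnWith_of_prod_univ convex_univ
    (isCompact_closedBall x₀ (M * T)) (subset_univ _) (-T) T
  have hPL : IsPicardLindelof (fun t z => g z t) (tmin := -T) (tmax := T)
      ⟨0, by simpa using hT⟩ x₀ ⟨M * T, by positivity⟩ 0 ⟨M, hM₀⟩ L :=
    { lipschitzOnWith := hL
      continuousOn := fun z _ =>
        (hg.continuous.comp (continuous_const.prodMk continuous_id)).continuousOn
      norm_le := fun t _ z _ => hM z t
      mul_max_le := by simp; rfl }
  exact hPL.exists_eq_forall_mem_Icc_hasDerivWithinAt₀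

theorem exists_forall_hasDerivAt_of_eqOn {v : ℝ → E → E} (γ : ℕ → ℝ → E)
    (hγ : ∀ n : ℕ, ∀ t ∈ Ioo (-(n : ℝ)) n, HasDerivAt (γ n) (v t (γ n t)) t)
    (hcompat : ∀ m n : ℕ, m ≤ n → EqOn (γ m) (γ n) (Ioo (-(m : ℝ)) m)) :
    ∃ Γ : ℝ → E, (∀ t, HasDerivAt Γ (v t (Γ t)) t) ∧ ∀ n : ℕ, EqOn Γ (γ n) (Ioo (-(n : ℝ)) n) := by
  have hmem : ∀ t : ℝ, t ∈ Ioo (-((⌈|t|⌉₊ + 1 : ℕ) : ℝ)) (⌈|t|⌉₊ + 1 : ℕ) := fun t => by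
    have := Nat.le_ceil |t|
    push_cast
    constructor <;> linarith [neg_abs_le t, le_abs_self t]
  have hΓ : ∀ n : ℕ, EqOn (fun t => γ (⌈|t|⌉₊ + 1) t) (γ n) (Ioo (-(n : ℝ)) n) := by
    intro n t ht
    rcases le_total (⌈|t|⌉₊ + 1) n with h | h
    · exact hcompat _ n h (hmem t)
    · exact (hcompat n _ h ht).symm
  refine ⟨fun t => γ (⌈|t|⌉₊ + 1) t, fun t => ?_, hΓ⟩
  rw [hΓ _ (hmem t)]
  exact (hγ _ t (hmem t)).congr_of_eventuallyEq
    (Filter.eventuallyEq_of_mem (isOpen_Ioo.mem_nhds (hmem t)) (hΓ _))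

end NormedSpace

section InnerProductSpace

variable {E : Type*} [NormedAddCommGroup E] [InnerProductSpace ℝ E]

theorem norm_sq_le_one_sub_mul_exp {γ F : ℝ → E} {c T : ℝ} (hc : 0 < c)
    (hγ : ∀ t ∈ Icc 0 T, HasDerivWithinAt γ (F t) (Icc 0 T) t)
    (hF : ∀ t ∈ Icc 0 T, ‖γ t‖ < 1 → ‖F t‖ ≤ c / 2 * (1 - ‖γ t‖ ^ 2)) (h₀ : ‖γ 0‖ < 1) :
    ∀ t ∈ Icc 0 T, ‖γ t‖ ^ 2 ≤ 1 - (1 - ‖γ 0‖ ^ 2) * exp (-(2 * c * t)) := by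
  set w := 1 - ‖γ 0‖ ^ 2
  have hw : 0 < w := by nlinarith [norm_nonneg (γ 0)]
  have hB : ∀ t, HasDerivAt (fun t => 1 - w * exp (-(2 * c * t)))
      (w * (2 * c) * exp (-(2 * c * t))) t := fun t =>
    ((((hasDerivAt_id' t).const_mul (2 * c)).fun_neg.exp).const_mul w).const_sub 1
      |>.congr_deriv (by ring)
  -- where `‖γ‖²` touches the barrier, the curve is inside the ball and `hF` bounds the slope of
  -- `‖γ‖²` by half that of the barrier
  refine image_le_of_deriv_right_lt_deriv_boundary
    (fun t ht => (hγ t ht).norm_sq.continuousWithinAt)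
    (fun t ht => ((hγ t (Ico_subset_Icc_self ht)).norm_sq).mono_of_mem_nhdsWithin
      (Icc_mem_nhdsGE_of_mem ht)) (by simp [w]) hB fun t ht hB_eq => ?_
  have hpos : 0 < w * exp (-(2 * c * t)) := mul_pos hw (exp_pos _)
  have hγ1 : ‖γ t‖ < 1 := by nlinarith [norm_nonneg (γ t)]
  have hFt := hF t (Ico_subset_Icc_self ht) hγ1
  calc 2 * inner ℝ (γ t) (F t) ≤ 2 * (‖γ t‖ * ‖F t‖) := by gcongr; exact real_inner_le_norm _ _
    _ ≤ 2 * ‖F t‖ := by gcongr; nlinarith [norm_nonneg (F t)]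
    _ ≤ c * (w * exp (-(2 * c * t))) := by nlinarith
    _ < w * (2 * c) * exp (-(2 * c * t)) := by nlinarith

theorem norm_sq_le_one_sub_mul_exp_abs {γ F : ℝ → E} {c T : ℝ} (hc : 0 < c)
    (hγ : ∀ t ∈ Icc (-T) T, HasDerivWithinAt γ (F t) (Icc (-T) T) t)
    (hF : ∀ t ∈ Icc (-T) T, ‖γ t‖ < 1 → ‖F t‖ ≤ c / 2 * (1 - ‖γ t‖ ^ 2)) (h₀ : ‖γ 0‖ < 1) :
    ∀ t ∈ Icc (-T) T, ‖γ t‖ ^ 2 ≤ 1 - (1 - ‖γ 0‖ ^ 2) * exp (-(2 * c * |t|)) := by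
  have hsub : Icc 0 T ⊆ Icc (-T) T := fun s hs => ⟨by linarith [hs.1, hs.2], hs.2⟩
  have hneg : MapsTo (fun s : ℝ => -s) (Icc 0 T) (Icc (-T) T) :=
    fun s hs => ⟨neg_le_neg hs.2, by linarith [hs.1, hs.2]⟩
  have hfwd := norm_sq_le_one_sub_mul_exp hc (fun t ht => (hγ t (hsub ht)).mono hsub)
    (fun t ht => hF t (hsub ht)) h₀
  have hbwd := norm_sq_le_one_sub_mul_exp (γ := fun s => γ (-s)) (F := fun s => -F (-s)) hc
    (fun s hs => by
      simpa [Function.comp_def] using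
        (hγ (-s) (hneg hs)).scomp s (hasDerivAt_neg s).hasDerivWithinAt hneg)
    (fun s hs h => by simpa using hF (-s) (hneg hs) h) (by simpa using h₀)
  intro t ht
  rcases le_total 0 t with h | h
  · simpa [abs_of_nonneg h] using hfwd t ⟨h, ht.2⟩
  · simpa [abs_of_nonpos h] using hbwd (-t) ⟨neg_nonneg.2 h, neg_le.1 ht.1⟩

theorem exists_hasDerivWithinAt_Icc_norm_lt_one [ProperSpace E] {f : E → ℝ → E}
    (hf : ContDiffOn ℝ 1 (fun q : E × ℝ => f q.1 q.2) (ball (0 : E) 1 ×ˢ univ)) {c : ℝ}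
    (hc : 0 < c) (hbound : ∀ z : E, ‖z‖ < 1 → ∀ t, ‖f z t‖ ≤ c / 2 * (1 - ‖z‖ ^ 2))
    {z₀ : E} (hz₀ : ‖z₀‖ < 1) {T : ℝ} (hT : 0 ≤ T) :
    ∃ γ : ℝ → E, γ 0 = z₀ ∧
      (∀ t ∈ Icc (-T) T, HasDerivWithinAt γ (f (γ t) t) (Icc (-T) T) t) ∧
      ∀ t ∈ Icc (-T) T, ‖γ t‖ < 1 := by
  have hw : 0 < 1 - ‖z₀‖ ^ 2 := by nlinarith [norm_nonneg z₀]
  set β := (1 - ‖z₀‖ ^ 2) * exp (-(2 * c * T))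
  have hβ₀ : 0 < β := mul_pos hw (exp_pos _)
  have hβ₁ : β ≤ 1 :=
    mul_le_one₀ (by nlinarith [sq_nonneg ‖z₀‖]) (exp_pos _).le (exp_le_one_iff.2 (by nlinarith))
  -- `φ = 1` on the ball of radius `1 - β / 2`, which contains `{‖z‖² ≤ 1 - β}`, the region
  -- the a priori bound confines solutions to on `[-T, T]`
  let φ : ContDiffBump (0 : E) :=
    ⟨1 - β / 2, 1 - β / 4, by linarith, by linarith⟩
  have hφ : φ.rOut = 1 - β / 4 := rfl
  set g : E → ℝ → E := fun z t => φ z • f z t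
  have hφ₀ : ∀ z : E, 1 ≤ ‖z‖ → φ z = 0 := fun z hz =>
    φ.zero_of_le_dist (by rw [dist_zero_right, hφ]; linarith)
  have hg : ContDiff ℝ 1 (fun q : E × ℝ => g q.1 q.2) :=
    contDiff_smul_of_tsupport_subset isOpen_ball φ.contDiff
      (φ.tsupport_eq ▸ closedBall_subset_ball (by rw [hφ]; linarith)) hf
  have hgf : ∀ z t, ‖z‖ < 1 → ‖g z t‖ ≤ c / 2 * (1 - ‖z‖ ^ 2) := fun z t hz => by
    calc ‖g z t‖ = φ z * ‖f z t‖ := by rw [norm_smul, Real.norm_of_nonneg φ.nonneg]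
      _ ≤ 1 * ‖f z t‖ := by gcongr; exact φ.le_one
      _ ≤ c / 2 * (1 - ‖z‖ ^ 2) := by rw [one_mul]; exact hbound z hz t
  have hgc : ∀ z t, ‖g z t‖ ≤ c / 2 := fun z t => by
    rcases lt_or_ge ‖z‖ 1 with hz | hz
    · exact (hgf z t hz).trans (by nlinarith [sq_nonneg ‖z‖])
    · simpa [g, hφ₀ z hz] using (half_pos hc).le
  obtain ⟨γ, hγ₀, hγ⟩ := hg.exists_hasDerivWithinAt_Icc hgc z₀ hT
  have hγβ : ∀ t ∈ Icc (-T) T, ‖γ t‖ ≤ 1 - β / 2 := fun t ht => by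
    have h := norm_sq_le_one_sub_mul_exp_abs hc hγ (fun t _ => hgf (γ t) t) (hγ₀ ▸ hz₀) t ht
    have : exp (-(2 * c * T)) ≤ exp (-(2 * c * |t|)) :=
      exp_le_exp.2 (by nlinarith [abs_le.2 ⟨ht.1, ht.2⟩])
    rw [hγ₀] at h
    have h' : ‖γ t‖ ^ 2 ≤ 1 - β :=
      h.trans (sub_le_sub_left (mul_le_mul_of_nonneg_left this hw.le) 1)
    nlinarith [norm_nonneg (γ t), sq_nonneg (β / 2)]
  refine ⟨γ, hγ₀, fun t ht => ?_, fun t ht => (hγβ t ht).trans_lt (by linarith)⟩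
  have hgf_eq : g (γ t) t = f (γ t) t := by
    simp [g, φ.one_of_mem_closedBall (mem_closedBall_zero_iff.2 (hγβ t ht))]
  exact hgf_eq ▸ hγ t ht

theorem exists_forall_hasDerivAt_norm_lt_one [ProperSpace E] {f : E → ℝ → E}
    (hf : ContDiffOn ℝ 1 (fun q : E × ℝ => f q.1 q.2) (ball (0 : E) 1 ×ˢ univ)) {c : ℝ}
    (hc : 0 < c) (hbound : ∀ z : E, ‖z‖ < 1 → ∀ t, ‖f z t‖ ≤ c / 2 * (1 - ‖z‖ ^ 2))
    {z₀ : E} (hz₀ : ‖z₀‖ < 1) :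
    ∃ γ : ℝ → E, γ 0 = z₀ ∧ (∀ t, HasDerivAt γ (f (γ t) t) t) ∧ ∀ t, ‖γ t‖ < 1 := by
  choose γ hγ₀ hγ hγ₁ using fun n : ℕ =>
    exists_hasDerivWithinAt_Icc_norm_lt_one hf hc hbound hz₀ (T := n + 1) (by positivity)
  have hIoo : ∀ n : ℕ, Ioo (-(n : ℝ)) n ⊆ Icc (-(n + 1 : ℝ)) (n + 1) :=
    fun n => Ioo_subset_Icc_self.trans (Icc_subset_Icc (by linarith) (by linarith))
  have hcompat : ∀ m n : ℕ, m ≤ n → EqOn (γ m) (γ n) (Ioo (-(m : ℝ)) m) := by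
    intro m n hmn
    have hsub : Icc (-(m + 1 : ℝ)) (m + 1) ⊆ Icc (-(n + 1 : ℝ)) (n + 1) := by
      have : (m : ℝ) ≤ n := by exact_mod_cast hmn
      exact Icc_subset_Icc (by linarith) (by linarith)
    refine (ODE_solution_unique_of_contDiffOn (convex_ball 0 1) hf
      (t₀ := 0) ⟨by linarith [m.cast_nonneg (α := ℝ)], by positivity⟩ (hγ m)
      (fun t ht => (hγ n t (hsub ht)).mono hsub)
      (fun t ht => mem_ball_zero_iff.2 (hγ₁ m t ht))
      (fun t ht => mem_ball_zero_iff.2 (hγ₁ n t (hsub ht))) ((hγ₀ m).trans (hγ₀ n).symm)).mono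
      (hIoo m)
  obtain ⟨Γ, hΓ', hΓ⟩ := exists_forall_hasDerivAt_of_eqOn (v := fun t z => f z t) γ
    (fun n t ht => (hγ n t (hIoo n ht)).hasDerivAt
      (Icc_mem_nhds (by linarith [ht.1]) (by linarith [ht.2]))) hcompat
  refine ⟨Γ, (hΓ 1 (by norm_num)).trans (hγ₀ 1), hΓ', fun t => ?_⟩
  obtain ⟨n, hn⟩ := exists_nat_gt |t|
  have ht : t ∈ Ioo (-(n : ℝ)) n := abs_lt.1 hn
  rw [hΓ n ht]
  exact hγ₁ n t (hIoo n ht)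

end InnerProductSpace

theorem stmt_3_general (d : ℕ)
    (f : EuclideanSpace ℝ (Fin d) → ℝ → EuclideanSpace ℝ (Fin d))
    (hf : ContDiffOn ℝ 1 (fun q : EuclideanSpace ℝ (Fin d) × ℝ => f q.1 q.2)
      ((Metric.ball (0 : EuclideanSpace ℝ (Fin d)) 1) ×ˢ (univ : Set ℝ)))
    (c : ℝ) (hc : 0 < c)
    (hbound : ∀ z : EuclideanSpace ℝ (Fin d), ‖z‖ < 1 →
      ∀ t : ℝ, (2 / (1 - ‖z‖ ^ 2)) * ‖f z t‖ ≤ c) :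
    ∀ z₀ : EuclideanSpace ℝ (Fin d), ‖z₀‖ < 1 →
      ∃ γ : ℝ → EuclideanSpace ℝ (Fin d),
        γ 0 = z₀ ∧
        (∀ t : ℝ, HasDerivAt γ (f (γ t) t) t) ∧
        ∀ t : ℝ, ‖γ t‖ < 1 := by
  refine fun z₀ hz₀ => exists_forall_hasDerivAt_norm_lt_one hf hc (fun z hz t => ?_) hz₀
  have hpos : 0 < 1 - ‖z‖ ^ 2 := by nlinarith [norm_nonneg z]
  have := hbound z hz t
  rw [div_mul_eq_mul_div, div_le_iff₀ hpos] at this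
  linarith

/-- Instance of Proposition 1 for the Poincaré ball 𝔹ᵈ: a C¹ vector field on
the open unit ball whose hyperbolic norm is bounded generates, from every
initial point of the ball, an integral curve defined for all time which never
leaves the ball. -/
theorem stmt_3 (d : ℕ) (hd : 1 ≤ d)
    (f : EuclideanSpace ℝ (Fin d) → ℝ → EuclideanSpace ℝ (Fin d))
    (hf : ContDiffOn ℝ 1 (fun q : EuclideanSpace ℝ (Fin d) × ℝ => f q.1 q.2)
      ((Metric.ball (0 : EuclideanSpace ℝ (Fin d)) 1) ×ˢ (univ : Set ℝ)))
    (c : ℝ) (hc : 0 < c)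
    (hbound : ∀ z : EuclideanSpace ℝ (Fin d), ‖z‖ < 1 →
      ∀ t : ℝ, (2 / (1 - ‖z‖ ^ 2)) * ‖f z t‖ ≤ c) :
    ∀ z₀ : EuclideanSpace ℝ (Fin d), ‖z₀‖ < 1 →
      ∃ γ : ℝ → EuclideanSpace ℝ (Fin d),
        γ 0 = z₀ ∧
        (∀ t : ℝ, HasDerivAt γ (f (γ t) t) t) ∧
        ∀ t : ℝ, ‖γ t‖ < 1 :=
  stmt_3_general d f hf c hc hbound
end

section
/- Let n ≥ 1, let f : ℝⁿ × ℝ → ℝⁿ be continuously differentiable, and let p : ℝⁿ × ℝ → ℝ be a continuously differentiable, strictly positive function satisfying the continuity (Liouville) equation ∂p/∂t (z,t) = − div_z ( p(z,t) f(z,t) ) for all z ∈ ℝⁿ, t ∈ ℝ, where div_z g = Σᵢ ∂gᵢ/∂zᵢ. If z : ℝ → ℝⁿ is differentiable with z'(t) = f(z(t), t) for all t, then for all t, d/dt [ log p(z(t), t) ] = − (div_z f)(z(t), t). (Euclidean case of Proposition 2, 'Instantaneous change of variables'.) -/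
/-!
Along a trajectory the chain rule gives `d/dt p(z(t), t) = ∂_z p · f + ∂_t p`. The divergence is
the trace of the Jacobian, so it obeys the product rule `div (p f) = p div f + ∂_z p · f`; with the
continuity equation the two `∂_z p · f` terms cancel, leaving `d/dt p(z(t), t) = -p div f`, and
dividing by `p > 0` gives the derivative of `log p`.
-/

open Finset in
/-- The Euclidean divergence `div g (z) = Σᵢ ∂gᵢ/∂zᵢ (z)`, i.e. the trace of the
Jacobian of `g` at `z`. -/
noncomputable def eucDiv {n : ℕ}
    (g : EuclideanSpace ℝ (Fin n) → EuclideanSpace ℝ (Fin n))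
    (z : EuclideanSpace ℝ (Fin n)) : ℝ :=
  ∑ i : Fin n, fderiv ℝ g z (EuclideanSpace.single i (1 : ℝ)) i

section Divergence

variable {n : ℕ}

theorem eucDiv_eq_trace (g : EuclideanSpace ℝ (Fin n) → EuclideanSpace ℝ (Fin n))
    (z : EuclideanSpace ℝ (Fin n)) :
    eucDiv g z = LinearMap.trace ℝ _ (fderiv ℝ g z : EuclideanSpace ℝ (Fin n) →ₗ[ℝ] _) := by
  rw [LinearMap.trace_eq_matrix_trace ℝ (EuclideanSpace.basisFun (Fin n) ℝ).toBasis]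
  simp [eucDiv, Matrix.trace, LinearMap.toMatrix_apply]

theorem eucDiv_smul {g : EuclideanSpace ℝ (Fin n) → ℝ}
    {F : EuclideanSpace ℝ (Fin n) → EuclideanSpace ℝ (Fin n)} {z : EuclideanSpace ℝ (Fin n)}
    (hg : DifferentiableAt ℝ g z) (hF : DifferentiableAt ℝ F z) :
    eucDiv (fun y => g y • F y) z = g z * eucDiv F z + fderiv ℝ g z (F z) := by
  rw [eucDiv_eq_trace, eucDiv_eq_trace, fderiv_fun_smul hg hF,
    ContinuousLinearMap.toLinearMap_add, map_add, ContinuousLinearMap.toLinearMap_smul, map_smul,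
    smul_eq_mul]
  congr 1
  exact LinearMap.trace_smulRight _ _

end Divergence

theorem DifferentiableAt.hasDerivAt_comp_graph {E F : Type*} [NormedAddCommGroup E]
    [NormedSpace ℝ E] [NormedAddCommGroup F] [NormedSpace ℝ F] {p : E × ℝ → F} {z : ℝ → E}
    {v : E} {t : ℝ} (hp : DifferentiableAt ℝ p (z t, t)) (hz : HasDerivAt z v t) :
    HasDerivAt (fun s => p (z s, s))
      (fderiv ℝ (fun y => p (y, t)) (z t) v + deriv (fun s => p (z t, s)) t) t := by
  set D := fderiv ℝ p (z t, t)
  have hspace : HasFDerivAt (fun y => p (y, t)) (D.comp (.inl ℝ E ℝ)) (z t) :=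
    hp.hasFDerivAt.comp (z t) (hasFDerivAt_prodMk_left (z t) t)
  have htime : HasDerivAt (fun s => p (z t, s)) (D (0, 1)) t :=
    hp.hasFDerivAt.comp_hasDerivAt t ((hasDerivAt_const t (z t)).prodMk (hasDerivAt_id t))
  have hgraph : HasDerivAt (fun s => p (z s, s)) (D (v, 1)) t :=
    hp.hasFDerivAt.comp_hasDerivAt (f := fun s => (z s, s)) t (hz.prodMk (hasDerivAt_id t))
  rwa [hspace.fderiv, htime.deriv, ContinuousLinearMap.comp_apply, ContinuousLinearMap.inl_apply,
    ← map_add, Prod.mk_add_mk, add_zero, zero_add]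

theorem stmt_4_general (n : ℕ)
    (f : EuclideanSpace ℝ (Fin n) × ℝ → EuclideanSpace ℝ (Fin n))
    (hf : ContDiff ℝ 1 f)
    (p : EuclideanSpace ℝ (Fin n) × ℝ → ℝ)
    (hp : ContDiff ℝ 1 p)
    (hppos : ∀ z t, 0 < p (z, t))
    (hliouville : ∀ (z : EuclideanSpace ℝ (Fin n)) (t : ℝ),
      deriv (fun s => p (z, s)) t
        = - eucDiv (fun y => p (y, t) • f (y, t)) z)
    (z : ℝ → EuclideanSpace ℝ (Fin n))
    (hz : ∀ t : ℝ, HasDerivAt z (f (z t, t)) t) :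
    ∀ t : ℝ,
      HasDerivAt (fun s => Real.log (p (z s, s)))
        (- eucDiv (fun y => f (y, t)) (z t)) t := by
  intro t
  have hpD : Differentiable ℝ p := hp.differentiable one_ne_zero
  have hfD : Differentiable ℝ f := hf.differentiable one_ne_zero
  have hpt : DifferentiableAt ℝ (fun y => p (y, t)) (z t) := by fun_prop
  have hft : DifferentiableAt ℝ (fun y => f (y, t)) (z t) := by fun_prop
  have hchain := (hpD (z t, t)).hasDerivAt_comp_graph (hz t)
  rw [hliouville, eucDiv_smul hpt hft] at hchain
  have hp0 : p (z t, t) ≠ 0 := (hppos (z t) t).ne'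
  convert hchain.log hp0 using 1
  field_simp
  ring

/-- Euclidean case of Proposition 2 ("Instantaneous change of variables"):
if a strictly positive C¹ density `p` satisfies the Liouville / continuity
equation `∂p/∂t = − div_z (p f)` and `z(·)` is a trajectory of the C¹ vector
field `f`, then `d/dt log p(z(t), t) = − (div_z f)(z(t), t)`. -/
theorem stmt_4 (n : ℕ) (hn : 1 ≤ n)
    (f : EuclideanSpace ℝ (Fin n) × ℝ → EuclideanSpace ℝ (Fin n))
    (hf : ContDiff ℝ 1 f)
    (p : EuclideanSpace ℝ (Fin n) × ℝ → ℝ)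
    (hp : ContDiff ℝ 1 p)
    (hppos : ∀ z t, 0 < p (z, t))
    (hliouville : ∀ (z : EuclideanSpace ℝ (Fin n)) (t : ℝ),
      deriv (fun s => p (z, s)) t
        = - eucDiv (fun y => p (y, t) • f (y, t)) z)
    (z : ℝ → EuclideanSpace ℝ (Fin n))
    (hz : ∀ t : ℝ, HasDerivAt z (f (z t, t)) t) :
    ∀ t : ℝ,
      HasDerivAt (fun s => Real.log (p (z s, s)))
        (- eucDiv (fun y => f (y, t)) (z t)) t :=
  stmt_4_general n f hf p hp hppos hliouville z hz
end
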